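/- Let A be an n×n row-stochastic real matrix whose first row is (1, 0, …, 0), with aᵢᵢ > 0 for all i, and let Ã denote the (n−1)×(n−1) lower-right submatrix; assume Ã is substochastic and irreducible with at least one row of Ã summing to strictly less than 1. Let k ≥ 1, σ̄ ∈ ℝ^k, and X_t = (A ⊗ I_k) X_{t−1} with X₁ ∈ ℝ^{kn} whose first k-dimensional block equals σ̄. Then consensus to 𝟏ₙ ⊗ σ̄ is reached exponentially: for every r with ρ(Ã) < r < 1 there exists a constant C > 0 such that ‖X_t − (𝟏ₙ ⊗ σ̄)‖_∞ ≤ C · r^{t−1} · ‖X₁ − (𝟏ₙ ⊗ σ̄)‖_∞ for all t ≥ 1, where ρ(Ã) < 1 is the spectral radius of Ã. -/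

import Mathlib

open Kronecker

/-- The vector infinity norm: maximum absolute value of the entries. -/
noncomputable def vecInfNorm {ι : Type*} [Fintype ι] (v : ι → ℝ) : ℝ :=
  ⨆ i, |v i|

/-- The spectral radius of a real square matrix: the maximum of the absolute
values of its complex eigenvalues (as a real number). -/
noncomputable def matSpectralRadius {n : ℕ} (M : Matrix (Fin n) (Fin n) ℝ) : ℝ :=
  (spectralRadius ℂ (M.map (Complex.ofReal ·))).toReal

/-!
Irreducibility carries every follower to a follower whose row of `Ã` is deficient, so some
power `Ã ^ m` has all row sums `< 1`, i.e. `‖Ã ^ m‖_∞ < 1`, whence `ρ(Ã) < 1`. By Gelfand's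
formula `‖Ã ^ t‖_∞ ≤ C r ^ t` for any `r > ρ(Ã)`. The dynamics act on each of the `k`
coordinates separately; since `A` is row-stochastic, subtracting the leader's constant value
commutes with `A`, and since the leader never moves, its error stays `0` while the followers'
errors evolve by `Ã`.
-/

open Matrix Filter Asymptotics

attribute [local instance] Matrix.linftyOpNormedRing Matrix.linftyOpNormedAlgebra

theorem vecInfNorm_eq_norm {ι : Type*} [Fintype ι] (v : ι → ℝ) : vecInfNorm v = ‖v‖ :=
  le_antisymm (Real.iSup_le (fun i => norm_le_pi_norm v i) (norm_nonneg v))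
    ((pi_norm_le_iff_of_nonneg (Real.iSup_nonneg fun i => abs_nonneg (v i))).2
      fun i => le_ciSup (f := fun i => |v i|) (Set.finite_range _).bddAbove i)

theorem sum_pow_succ_apply {R ι : Type*} [Semiring R] [Fintype ι] [DecidableEq ι]
    (B : Matrix ι ι R) (t : ℕ) (i : ι) :
    ∑ j, (B ^ (t + 1)) i j = ∑ p, (B ^ t) i p * ∑ j, B p j := by
  simp_rw [pow_succ, mul_apply, Finset.mul_sum]
  exact Finset.sum_comm

section Substochastic

variable {ι : Type*} [Fintype ι] [DecidableEq ι] {B : Matrix ι ι ℝ}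

theorem antitone_sum_pow_apply (hB : ∀ i j, 0 ≤ B i j) (hrow : ∀ i, ∑ j, B i j ≤ 1) (i : ι) :
    Antitone fun t => ∑ j, (B ^ t) i j :=
  antitone_nat_of_succ_le fun t => by
    rw [sum_pow_succ_apply]
    exact Finset.sum_le_sum fun p _ =>
      mul_le_of_le_one_right (pow_apply_nonneg hB t i p) (hrow p)

theorem sum_pow_apply_le_one (hB : ∀ i j, 0 ≤ B i j) (hrow : ∀ i, ∑ j, B i j ≤ 1)
    (t : ℕ) (i : ι) : ∑ j, (B ^ t) i j ≤ 1 := by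
  simpa [one_apply] using antitone_sum_pow_apply hB hrow i (Nat.zero_le t)

theorem sum_pow_succ_apply_lt_one (hB : ∀ i j, 0 ≤ B i j) (hrow : ∀ i, ∑ j, B i j ≤ 1)
    {i₀ : ι} (hi₀ : ∑ j, B i₀ j < 1) {t : ℕ} {i : ι} (hpos : 0 < (B ^ t) i i₀) :
    ∑ j, (B ^ (t + 1)) i j < 1 := by
  rw [sum_pow_succ_apply]
  calc ∑ p, (B ^ t) i p * ∑ j, B p j < ∑ p, (B ^ t) i p :=
        Finset.sum_lt_sum
          (fun p _ => mul_le_of_le_one_right (pow_apply_nonneg hB t i p) (hrow p))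
          ⟨i₀, Finset.mem_univ _, mul_lt_of_lt_one_right hpos hi₀⟩
    _ ≤ 1 := sum_pow_apply_le_one hB hrow t i

theorem exists_pow_sum_apply_lt_one (hB : ∀ i j, 0 ≤ B i j) (hrow : ∀ i, ∑ j, B i j ≤ 1)
    {i₀ : ι} (hi₀ : ∑ j, B i₀ j < 1) (hreach : ∀ i, ∃ t, 0 < (B ^ t) i i₀) :
    ∃ m, m ≠ 0 ∧ ∀ i, ∑ j, (B ^ m) i j < 1 := by
  choose t ht using hreach
  refine ⟨Finset.univ.sup t + 1, Nat.succ_ne_zero _, fun i => ?_⟩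
  exact (antitone_sum_pow_apply hB hrow i
    (Nat.succ_le_succ (Finset.le_sup (Finset.mem_univ i)))).trans_lt
    (sum_pow_succ_apply_lt_one hB hrow hi₀ (ht i))

theorem nnnorm_lt_one_of_sum_apply_lt_one (hB : ∀ i j, 0 ≤ B i j)
    (hrow : ∀ i, ∑ j, B i j < 1) : ‖B‖₊ < 1 := by
  rw [linfty_opNNNorm_def, Finset.sup_lt_iff zero_lt_one]
  intro i _
  rw [← NNReal.coe_lt_coe, NNReal.coe_sum]
  simpa [abs_of_nonneg (hB i _)] using hrow i

end Substochastic

section SpectralRadius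

variable {𝕜 A : Type*} [NormedRing A] [CompleteSpace A]

theorem spectralRadius_lt_top [NormedField 𝕜] [NormedAlgebra 𝕜 A] (a : A) :
    spectralRadius 𝕜 a < ⊤ :=
  (spectrum.spectralRadius_le_pow_nnnorm_pow_one_div 𝕜 a 0).trans_lt <| by
    simp [ENNReal.mul_lt_top]

theorem spectralRadius_lt_one_of_nnnorm_pow_lt_one [NormedField 𝕜] [NormedAlgebra 𝕜 A]
    [NormOneClass A] {a : A} {m : ℕ} (hm : m ≠ 0) (h : ‖a ^ m‖₊ < 1) :
    spectralRadius 𝕜 a < 1 := by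
  obtain ⟨m, rfl⟩ := Nat.exists_eq_succ_of_ne_zero hm
  refine (spectrum.spectralRadius_le_pow_nnnorm_pow_one_div 𝕜 a m).trans_lt ?_
  rw [nnnorm_one, ENNReal.coe_one, ENNReal.one_rpow, mul_one]
  exact ENNReal.rpow_lt_one (ENNReal.coe_lt_one_iff.2 h) (by positivity)

theorem exists_norm_pow_le_mul_pow_of_spectralRadius_lt [NormedAlgebra ℂ A] {a : A} {r : ℝ}
    (h : spectralRadius ℂ a < ENNReal.ofReal r) : ∃ C > 0, ∀ t, ‖a ^ t‖ ≤ C * r ^ t := by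
  have hr : 0 < r := ENNReal.ofReal_pos.1 (pos_of_gt h)
  have hev : ∀ᶠ t in atTop, ‖a ^ t‖ ≤ r ^ t := by
    filter_upwards [eventually_ne_atTop 0,
      (spectrum.pow_norm_pow_one_div_tendsto_nhds_spectralRadius a).eventually_lt_const h]
      with t ht0 ht
    rw [ENNReal.ofReal_lt_ofReal_iff hr, one_div] at ht
    calc ‖a ^ t‖ = (‖a ^ t‖ ^ (t⁻¹ : ℝ)) ^ t :=
          (Real.rpow_inv_natCast_pow (norm_nonneg _) ht0).symm
      _ ≤ r ^ t := pow_le_pow_left₀ (by positivity) ht.le t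
  have : (fun t => a ^ t) =O[atTop] fun t => r ^ t :=
    IsBigO.of_bound 1 (hev.mono fun t ht => by simpa [abs_of_pos hr] using ht)
  obtain ⟨C, hC, hCt⟩ := bound_of_isBigO_nat_atTop this
  refine ⟨C, hC, fun t => ?_⟩
  simpa [abs_of_pos hr] using hCt (pow_ne_zero t hr.ne')

end SpectralRadius

section RealMatrix

variable {n : Type*} [Fintype n] [DecidableEq n]

theorem nnnorm_map_ofReal (M : Matrix n n ℝ) : ‖M.map (Complex.ofReal ·)‖₊ = ‖M‖₊ := by
  simp [linfty_opNNNorm_def]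

theorem norm_map_ofReal (M : Matrix n n ℝ) : ‖M.map (Complex.ofReal ·)‖ = ‖M‖ :=
  congrArg NNReal.toReal (nnnorm_map_ofReal M)

theorem map_ofReal_pow (M : Matrix n n ℝ) (t : ℕ) :
    M.map (Complex.ofReal ·) ^ t = (M ^ t).map (Complex.ofReal ·) :=
  (map_pow (Complex.ofRealHom.mapMatrix : Matrix n n ℝ →+* _) M t).symm

end RealMatrix

theorem matSpectralRadius_lt_one_of_nnnorm_pow_lt_one {n : ℕ} [Nonempty (Fin n)]
    {B : Matrix (Fin n) (Fin n) ℝ} {m : ℕ} (hm : m ≠ 0) (h : ‖B ^ m‖₊ < 1) :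
    matSpectralRadius B < 1 := by
  refine ENNReal.toReal_lt_of_lt_ofReal ?_
  rw [ENNReal.ofReal_one]
  refine spectralRadius_lt_one_of_nnnorm_pow_lt_one hm ?_
  rwa [map_ofReal_pow, nnnorm_map_ofReal]

theorem exists_norm_pow_le_mul_pow_of_matSpectralRadius_lt {n : ℕ}
    {B : Matrix (Fin n) (Fin n) ℝ} {r : ℝ} (hr : matSpectralRadius B < r) :
    ∃ C > 0, ∀ t, ‖B ^ t‖ ≤ C * r ^ t := by
  obtain ⟨C, hC, h⟩ := exists_norm_pow_le_mul_pow_of_spectralRadius_lt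
    ((ENNReal.lt_ofReal_iff_toReal_lt (spectralRadius_lt_top _).ne).2 hr)
  exact ⟨C, hC, fun t => by simpa only [map_ofReal_pow, norm_map_ofReal] using h t⟩

section Dynamics

variable {R ι κ : Type*} [Fintype ι]

theorem eq_pow_mulVec_of_forall_succ [DecidableEq ι] [Semiring R] {M : Matrix ι ι R}
    {x : ℕ → ι → R} (h : ∀ t, x (t + 1) = M *ᵥ x t) (t : ℕ) : x t = M ^ t *ᵥ x 0 := by
  induction t with
  | zero => simp
  | succ t ih => rw [h, ih, mulVec_mulVec, pow_succ']

theorem mulVec_sub_const_of_sum_row_eq_one [Ring R] {M : Matrix ι ι R}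
    (hM : ∀ i, ∑ j, M i j = 1) (x : ι → R) (c : R) :
    M *ᵥ (x - fun _ => c) = M *ᵥ x - fun _ => c := by
  rw [mulVec_sub]
  congr 1
  ext i
  simp [mulVec, dotProduct, ← Finset.sum_mul, hM i]

theorem kronecker_one_mulVec_apply [Semiring R] [Fintype κ] [DecidableEq κ] (M : Matrix ι ι R)
    (v : ι × κ → R) (i : ι) (j : κ) :
    ((M ⊗ₖ (1 : Matrix κ κ R)) *ᵥ v) (i, j) = (M *ᵥ fun p => v (p, j)) i := by
  simp [mulVec, dotProduct, Fintype.sum_prod_type, one_apply]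

end Dynamics

section Leader

variable {R : Type*} [Semiring R] {n : ℕ} {A : Matrix (Fin (n + 1)) (Fin (n + 1)) R}

theorem mulVec_apply_zero_of_leader (h₁ : A 0 0 = 1) (h₂ : ∀ j, j ≠ 0 → A 0 j = 0)
    (y : Fin (n + 1) → R) : (A *ᵥ y) 0 = y 0 := by
  simp [mulVec, dotProduct, Fin.sum_univ_succ, h₁, h₂ _ (Fin.succ_ne_zero _)]

theorem mulVec_comp_succ_of_apply_zero_eq_zero {y : Fin (n + 1) → R} (hy : y 0 = 0) :
    (A *ᵥ y) ∘ Fin.succ = A.submatrix Fin.succ Fin.succ *ᵥ (y ∘ Fin.succ) := by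
  ext i
  simp [mulVec, dotProduct, Fin.sum_univ_succ, hy]

theorem pow_mulVec_of_leader (h₁ : A 0 0 = 1) (h₂ : ∀ j, j ≠ 0 → A 0 j = 0)
    {y : Fin (n + 1) → R} (hy : y 0 = 0) (t : ℕ) :
    (A ^ t *ᵥ y) 0 = 0 ∧
      (A ^ t *ᵥ y) ∘ Fin.succ = A.submatrix Fin.succ Fin.succ ^ t *ᵥ (y ∘ Fin.succ) := by
  induction t with
  | zero => simp [hy]
  | succ t ih =>
    rw [pow_succ', ← mulVec_mulVec, mulVec_apply_zero_of_leader h₁ h₂,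
      mulVec_comp_succ_of_apply_zero_eq_zero ih.1, ih.2, mulVec_mulVec, ← pow_succ']
    exact ⟨ih.1, rfl⟩

end Leader

theorem norm_pow_mulVec_le_of_leader {n : ℕ} {A : Matrix (Fin (n + 1)) (Fin (n + 1)) ℝ}
    (h₁ : A 0 0 = 1) (h₂ : ∀ j, j ≠ 0 → A 0 j = 0) {y : Fin (n + 1) → ℝ} (hy : y 0 = 0)
    (t : ℕ) : ‖A ^ t *ᵥ y‖ ≤ ‖A.submatrix Fin.succ Fin.succ ^ t‖ * ‖y‖ := by
  obtain ⟨h0, hsucc⟩ := pow_mulVec_of_leader h₁ h₂ hy t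
  refine (pi_norm_le_iff_of_nonneg (by positivity)).2 fun i => ?_
  cases i using Fin.cases with
  | zero => rw [h0, norm_zero]; positivity
  | succ i =>
    calc ‖(A ^ t *ᵥ y) i.succ‖ ≤ ‖(A ^ t *ᵥ y) ∘ Fin.succ‖ :=
          norm_le_pi_norm ((A ^ t *ᵥ y) ∘ Fin.succ) i
      _ ≤ ‖A.submatrix Fin.succ Fin.succ ^ t‖ * ‖y ∘ Fin.succ‖ :=
          hsucc ▸ linfty_opNorm_mulVec _ _
      _ ≤ ‖A.submatrix Fin.succ Fin.succ ^ t‖ * ‖y‖ := by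
          gcongr
          exact pi_norm_comp_le y Fin.succ

theorem norm_sub_le_of_kronecker_leader_dynamics {n : ℕ} {κ : Type*} [Fintype κ]
    [DecidableEq κ] {A : Matrix (Fin (n + 1)) (Fin (n + 1)) ℝ} (hrow : ∀ i, ∑ j, A i j = 1)
    (h₁ : A 0 0 = 1) (h₂ : ∀ j, j ≠ 0 → A 0 j = 0) (σ : κ → ℝ) {X : ℕ → Fin (n + 1) × κ → ℝ}
    (hX : ∀ t, X (t + 1) = (A ⊗ₖ (1 : Matrix κ κ ℝ)) *ᵥ X t) (hX₀ : ∀ j, X 0 (0, j) = σ j)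
    (t : ℕ) :
    ‖X t - fun p => σ p.2‖ ≤
      ‖A.submatrix Fin.succ Fin.succ ^ t‖ * ‖X 0 - fun p => σ p.2‖ := by
  set φ : Fin (n + 1) × κ → ℝ := fun p => σ p.2
  have hcol (j : κ) : (fun i => X t (i, j) - σ j) = A ^ t *ᵥ fun i => X 0 (i, j) - σ j :=
    eq_pow_mulVec_of_forall_succ (x := fun s i => X s (i, j) - σ j) (fun s => by
      simp only [hX, kronecker_one_mulVec_apply]
      exact (mulVec_sub_const_of_sum_row_eq_one hrow _ _).symm) t
  refine (pi_norm_le_iff_of_nonneg (by positivity)).2 fun ⟨i, j⟩ => ?_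
  calc ‖(X t - φ) (i, j)‖ ≤ ‖fun i => X t (i, j) - σ j‖ :=
        norm_le_pi_norm (fun i => X t (i, j) - σ j) i
    _ = ‖A ^ t *ᵥ fun i => X 0 (i, j) - σ j‖ := by rw [hcol]
    _ ≤ ‖A.submatrix Fin.succ Fin.succ ^ t‖ * ‖fun i => X 0 (i, j) - σ j‖ :=
        norm_pow_mulVec_le_of_leader h₁ h₂ (by simp [hX₀]) t
    _ ≤ ‖A.submatrix Fin.succ Fin.succ ^ t‖ * ‖X 0 - φ‖ := by
        gcongr
        exact pi_norm_comp_le (X 0 - φ) (·, j)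

theorem exponential_consensus_with_leader_vectored_general
    {n k : ℕ}
    (A : Matrix (Fin (n + 1)) (Fin (n + 1)) ℝ)
    (hA_row : ∀ i, ∑ j, A i j = 1)
    (hA_leader₁ : A 0 0 = 1) (hA_leader₂ : ∀ j, j ≠ 0 → A 0 j = 0)
    (Atil : Matrix (Fin n) (Fin n) ℝ)
    (hAtil : ∀ i j, Atil i j = A i.succ j.succ)
    (hsub_nonneg : ∀ i j, 0 ≤ Atil i j)
    (hsub_row : ∀ i, ∑ j, Atil i j ≤ 1)
    (hsub_strict : ∃ i, ∑ j, Atil i j < 1)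
    (hirr : ∀ i j, ∃ t : ℕ, 0 < t ∧ 0 < (Atil ^ t) i j)
    (σ : Fin k → ℝ) (X : ℕ → Fin (n + 1) × Fin k → ℝ)
    (hX : ∀ t, X (t + 1) =
      (A ⊗ₖ (1 : Matrix (Fin k) (Fin k) ℝ)).mulVec (X t))
    (hX₀ : ∀ j, X 0 (0, j) = σ j) :
    matSpectralRadius Atil < 1 ∧
      ∀ r : ℝ, matSpectralRadius Atil < r → r < 1 →
        ∃ C : ℝ, 0 < C ∧
          ∀ t : ℕ, vecInfNorm (X t - (fun p => σ p.2)) ≤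
            C * r ^ t * vecInfNorm (X 0 - (fun p => σ p.2)) := by
  obtain ⟨i₀, hi₀⟩ := hsub_strict
  have : Nonempty (Fin n) := ⟨i₀⟩
  obtain ⟨m, hm, hm_lt⟩ := exists_pow_sum_apply_lt_one hsub_nonneg hsub_row hi₀
    fun i => (hirr i i₀).imp fun _ => And.right
  refine ⟨matSpectralRadius_lt_one_of_nnnorm_pow_lt_one hm
    (nnnorm_lt_one_of_sum_apply_lt_one (pow_apply_nonneg hsub_nonneg m) hm_lt), fun r hr _ => ?_⟩
  obtain ⟨C, hC, hC_pow⟩ := exists_norm_pow_le_mul_pow_of_matSpectralRadius_lt hr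
  obtain rfl : Atil = A.submatrix Fin.succ Fin.succ := Matrix.ext hAtil
  refine ⟨C, hC, fun t => ?_⟩
  rw [vecInfNorm_eq_norm, vecInfNorm_eq_norm]
  exact (norm_sub_le_of_kronecker_leader_dynamics hA_row hA_leader₁ hA_leader₂ σ hX hX₀ t).trans
    (by gcongr; exact hC_pow t)

/-- **Corollary 4: exponential consensus with an unknown leader, vectored
dynamics.** Under the hypotheses of Theorem 4, `ρ(Ã) < 1` and for every rate
`r` with `ρ(Ã) < r < 1` there is `C > 0` such that
`‖X_t − 𝟏ₙ ⊗ σ̄‖_∞ ≤ C · r^{t−1} · ‖X₁ − 𝟏ₙ ⊗ σ̄‖_∞`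
(indices shifted so that the initial condition is `X 0`). -/
theorem exponential_consensus_with_leader_vectored
    {n k : ℕ} (hk : 1 ≤ k)
    (A : Matrix (Fin (n + 1)) (Fin (n + 1)) ℝ)
    (hA_nonneg : ∀ i j, 0 ≤ A i j)
    (hA_row : ∀ i, ∑ j, A i j = 1)
    (hA_diag : ∀ i, 0 < A i i)
    (hA_leader₁ : A 0 0 = 1) (hA_leader₂ : ∀ j, j ≠ 0 → A 0 j = 0)
    (Atil : Matrix (Fin n) (Fin n) ℝ)
    (hAtil : ∀ i j, Atil i j = A i.succ j.succ)
    (hsub_nonneg : ∀ i j, 0 ≤ Atil i j)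
    (hsub_row : ∀ i, ∑ j, Atil i j ≤ 1)
    (hsub_strict : ∃ i, ∑ j, Atil i j < 1)
    (hirr : ∀ i j, ∃ t : ℕ, 0 < t ∧ 0 < (Atil ^ t) i j)
    (σ : Fin k → ℝ) (X : ℕ → Fin (n + 1) × Fin k → ℝ)
    (hX : ∀ t, X (t + 1) =
      (A ⊗ₖ (1 : Matrix (Fin k) (Fin k) ℝ)).mulVec (X t))
    (hX₀ : ∀ j, X 0 (0, j) = σ j) :
    matSpectralRadius Atil < 1 ∧
      ∀ r : ℝ, matSpectralRadius Atil < r → r < 1 →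
        ∃ C : ℝ, 0 < C ∧
          ∀ t : ℕ, vecInfNorm (X t - (fun p => σ p.2)) ≤
            C * r ^ t * vecInfNorm (X 0 - (fun p => σ p.2)) :=
  exponential_consensus_with_leader_vectored_general A hA_row hA_leader₁ hA_leader₂ Atil hAtil
    hsub_nonneg hsub_row hsub_strict hirr σ X hX hX₀
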